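/- If the mean number of spilled elements per throw satisfies α ≤ 1/(2e) and bucket capacity is c = ⌈log₂ log₂ n⌉, then the per-round overflow recursion x_{i+1} ≤ n / (2^{(c+1)^{i+1}} · (log₂ n)^{(c+1)^i} · e) starting from x_1 ≤ n/(2^{c+1} e log₂ n) implies that after O(log₂ log₂ n) rounds the overflow is less than 1. Formally: for n ≥ some absolute constant, there exists i ≤ C · log₂ log₂ n (for an absolute constant C) such that n / (2^{(c+1)^i} · (log₂ n)^{(c+1)^{i−1}} · e) < 1. -/

import Mathlib

/-!
Write `L = log₂ n` and `i = ⌈log₂ L⌉`. Then `L ≤ 2^i`, so `n = 2^L ≤ 2^(2^i) ≤ 2^((c+1)^i)`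
because `c = i ≥ 1`; the remaining factors `L^((c+1)^(i-1))` and `e` of the denominator are
at least `1` and greater than `1` respectively, so the quotient is below `1`.
-/

open Real

lemma le_pow_ceil_logb {b y : ℝ} (hb : 1 < b) (hy : 0 < y) : y ≤ b ^ ⌈logb b y⌉₊ := by
  rw [← rpow_natCast]
  exact (logb_le_iff_le_rpow hb hy).1 (Nat.le_ceil _)

lemma le_two_pow_two_pow_ceil_logb_logb {x : ℝ} (hx : 1 < x) :
    x ≤ 2 ^ 2 ^ ⌈logb 2 (logb 2 x)⌉₊ := by
  have hlog : 0 < logb 2 x := logb_pos one_lt_two hx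
  have hceil : ⌈logb 2 x⌉₊ ≤ 2 ^ ⌈logb 2 (logb 2 x)⌉₊ :=
    Nat.ceil_le.2 (by exact_mod_cast le_pow_ceil_logb one_lt_two hlog)
  calc x ≤ 2 ^ ⌈logb 2 x⌉₊ := le_pow_ceil_logb one_lt_two (by linarith)
    _ ≤ 2 ^ 2 ^ ⌈logb 2 (logb 2 x)⌉₊ := pow_le_pow_right₀ one_le_two hceil

/-- The per-round overflow bound `n / (2^{(c+1)^i} (log₂ n)^{(c+1)^{i-1}} e)` drops
below 1 within `log₂ log₂ n + 1` rounds, for `c = ⌈log₂ log₂ n⌉` and `n ≥ 16`. -/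
theorem overflow_recursion_terminates (n : ℕ) (hn : 16 ≤ n)
    (c : ℕ) (hc : c = ⌈Real.logb 2 (Real.logb 2 (n : ℝ))⌉₊) :
    ∃ i : ℕ, 1 ≤ i ∧ (i : ℝ) ≤ Real.logb 2 (Real.logb 2 (n : ℝ)) + 1 ∧
      (n : ℝ) / ((2 : ℝ) ^ ((c + 1) ^ i) *
        (Real.logb 2 (n : ℝ)) ^ ((c + 1) ^ (i - 1)) * Real.exp 1) < 1 := by
  have hn1 : (1 : ℝ) < n := by exact_mod_cast (by omega : 1 < n)
  have hlog : 1 < logb 2 (n : ℝ) := by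
    rw [lt_logb_iff_rpow_lt one_lt_two (by linarith), rpow_one]
    exact_mod_cast (by omega : 2 < n)
  have hloglog : 0 < logb 2 (logb 2 (n : ℝ)) := logb_pos one_lt_two hlog
  have hc1 : 1 ≤ c := hc ▸ Nat.one_le_ceil_iff.2 hloglog
  refine ⟨c, hc1, hc ▸ (Nat.ceil_lt_add_one hloglog.le).le, ?_⟩
  have hnum : (n : ℝ) ≤ 2 ^ (c + 1) ^ c :=
    (hc ▸ le_two_pow_two_pow_ceil_logb_logb hn1).trans
      (pow_le_pow_right₀ one_le_two (Nat.pow_le_pow_left (by omega) c))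
  have hlogpow : 1 ≤ logb 2 (n : ℝ) ^ (c + 1) ^ (c - 1) := one_le_pow₀ hlog.le
  rw [div_lt_one (by positivity)]
  calc (n : ℝ) < 2 ^ (c + 1) ^ c * 1 * exp 1 := by
        rw [mul_one]
        exact hnum.trans_lt (lt_mul_of_one_lt_right (by positivity) (one_lt_exp_iff.2 one_pos))
    _ ≤ 2 ^ (c + 1) ^ c * logb 2 (n : ℝ) ^ (c + 1) ^ (c - 1) * exp 1 := by gcongr
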